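/- arXiv:1912.04428 — 3 statements merged into one kernel-verified Lean document; each statement's English description precedes it below -/
import Mathlib

section
/- For two convex bodies K, L ⊂ ℝ^d with nonempty interior, the Hausdorff distance between K and L equals the Hausdorff distance between their boundaries: d_H(K, L) = d_H(∂K, ∂L). -/
open MeasureTheory Topology Metric Set Filter Function
open scoped ENNReal RealInnerProductSpace

noncomputable section

abbrev Euc (d : ℕ) := EuclideanSpace ℝ (Fin d)

/-- The rotation set of a potential `F` with respect to the dynamics `T`. -/
def rotSet {X : Type*} [MeasurableSpace X] {d : ℕ} (T : X → X) (F : X → Euc d) :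
    Set (Euc d) :=
  {v | ∃ μ : Measure X, IsProbabilityMeasure μ ∧ Measure.map T μ = μ ∧ ∫ x, F x ∂μ = v}

/-- A `T`-invariant probability measure supported on a single periodic orbit. -/
def IsPeriodicMeasure {X : Type*} [MeasurableSpace X] (T : X → X) (μ : Measure X) : Prop :=
  ∃ (x : X) (n : ℕ), 0 < n ∧ T^[n] x = x ∧
    μ = (n : ℝ≥0∞)⁻¹ • ∑ i ∈ Finset.range n, Measure.dirac (T^[i] x)

/-- The periodic rotation set. -/
def perRotSet {X : Type*} [MeasurableSpace X] {d : ℕ} (T : X → X) (F : X → Euc d) :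
    Set (Euc d) :=
  {v | ∃ μ : Measure X, IsPeriodicMeasure T μ ∧ ∫ x, F x ∂μ = v}

/-- `T` has at least two distinct invariant probability measures. -/
def NonUniquelyErgodic {X : Type*} [MeasurableSpace X] (T : X → X) : Prop :=
  ∃ μ ν : Measure X, IsProbabilityMeasure μ ∧ IsProbabilityMeasure ν ∧
    Measure.map T μ = μ ∧ Measure.map T ν = ν ∧ μ ≠ ν

/-- The periodic measures are weak-* dense in the set of invariant probability measures. -/
def DensePeriodicMeasures {X : Type*} [MeasurableSpace X] [TopologicalSpace X] [OpensMeasurableSpace X]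
    (T : X → X) : Prop :=
  ∀ μ : ProbabilityMeasure X, Measure.map T μ.toMeasure = μ.toMeasure →
    μ ∈ closure {ν : ProbabilityMeasure X | IsPeriodicMeasure T ν.toMeasure}

/-! For `x ∈ K \ L` and `p ∈ L`, the ray from `p` through `x` leaves `K` at a boundary point `y`,
and convexity of `L` gives `d(x, L) ≤ d(y, L) ≤ d(y, ∂L)`; hence `d_H(K, L) ≤ d_H(∂K, ∂L)`.
Conversely, let `x ∈ ∂K`. If `x ∉ L`, the segment from `x` to any point of `L` crosses `∂L`.
If `x ∈ L`, walk from `x` along the outer normal of a supporting hyperplane of `K` at `x` until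
leaving `L`: the point reached at distance `t` lies in `L` at distance at least `t` from `K`. -/

theorem IsPreconnected.inter_frontier_nonempty {X : Type*} [TopologicalSpace X] {s t : Set X}
    (hs : IsPreconnected s) (hst : (s ∩ t).Nonempty) (hst' : (s \ t).Nonempty) :
    (s ∩ frontier t).Nonempty := by
  by_contra h
  have hcover : s ⊆ interior t ∪ interior tᶜ := fun x hxs => by
    have hxf : x ∉ frontier t := fun hxf => h ⟨x, hxs, hxf⟩
    by_cases hxt : x ∈ t
    · exact Or.inl (self_sdiff_frontier t ▸ ⟨hxt, hxf⟩)
    · exact Or.inr (self_sdiff_frontier tᶜ ▸ ⟨hxt, frontier_compl t ▸ hxf⟩)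
  obtain ⟨a, has, hat⟩ := hst
  obtain ⟨b, hbs, hbt⟩ := hst'
  obtain ⟨c, -, hct, hcct⟩ := hs _ _ isOpen_interior isOpen_interior hcover
    ⟨a, has, self_sdiff_frontier t ▸ ⟨hat, fun haf => h ⟨a, has, haf⟩⟩⟩
    ⟨b, hbs, self_sdiff_frontier tᶜ ▸ ⟨hbt, frontier_compl t ▸ fun hbf => h ⟨b, hbs, hbf⟩⟩⟩
  exact interior_subset hcct (interior_subset hct)

section NormedSpace

variable {E : Type*} [NormedAddCommGroup E] [NormedSpace ℝ E]

theorem Bornology.IsBounded.exists_add_smul_mem_frontier {L : Set E} (hL : Bornology.IsBounded L)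
    {x v : E} (hx : x ∈ L) (hv : v ≠ 0) : ∃ t : ℝ, 0 ≤ t ∧ x + t • v ∈ frontier L := by
  obtain ⟨R, hR⟩ := hL.subset_closedBall x
  have hR0 : 0 ≤ R := nonempty_closedBall.1 ⟨x, hR hx⟩
  have hvpos : 0 < ‖v‖ := norm_pos_iff.2 hv
  have hexit : x + ((R + 1) / ‖v‖) • v ∉ L := fun h => by
    have := hR h
    rw [mem_closedBall, dist_eq_norm, add_sub_cancel_left, norm_smul, Real.norm_of_nonneg
      (by positivity), div_mul_cancel₀ _ hvpos.ne'] at this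
    linarith
  have hray : IsPreconnected ((fun t : ℝ => x + t • v) '' Ici 0) :=
    isPreconnected_Ici.image _ (by fun_prop)
  obtain ⟨_, ⟨t, ht, rfl⟩, hfr⟩ := hray.inter_frontier_nonempty
    ⟨x, ⟨0, self_mem_Ici, by simp⟩, hx⟩ ⟨_, ⟨_, mem_Ici.2 (by positivity), rfl⟩, hexit⟩
  exact ⟨t, ht, hfr⟩

theorem Convex.infDist_le_infDist_of_mem_segment {L : Set E} (hL : Convex ℝ L) {p x y : E}
    (hp : p ∈ L) (hx : x ∈ segment ℝ p y) : infDist x L ≤ infDist y L := by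
  obtain ⟨a, b, ha, hb, hab, rfl⟩ := hx
  refine (le_infDist ⟨p, hp⟩).2 fun q hq => ?_
  calc infDist (a • p + b • y) L ≤ dist (a • p + b • y) (a • p + b • q) :=
        infDist_le_dist_of_mem (hL hp hq ha hb hab)
    _ = b * dist y q := by rw [dist_add_left, dist_smul₀, Real.norm_of_nonneg hb]
    _ ≤ dist y q := mul_le_of_le_one_left dist_nonneg (by linarith)

theorem Convex.exists_mem_frontier_infDist_le {K L : Set E} (hK : Bornology.IsBounded K)
    (hL : Convex ℝ L) {p x : E} (hp : p ∈ L) (hxK : x ∈ K) (hxL : x ∉ L) :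
    ∃ y ∈ frontier K, infDist x L ≤ infDist y L := by
  obtain ⟨t, ht, hy⟩ := hK.exists_add_smul_mem_frontier hxK
    (sub_ne_zero.2 (ne_of_mem_of_not_mem hp hxL).symm)
  refine ⟨_, hy, hL.infDist_le_infDist_of_mem_segment hp ?_⟩
  rw [mem_segment_iff_sameRay, add_sub_cancel_left]
  exact SameRay.sameRay_nonneg_smul_right _ ht

theorem Convex.infDist_le_hausdorffDist_frontier {K L : Set E} (hK : Bornology.IsBounded K)
    (hL : Bornology.IsBounded L) (hLv : Convex ℝ L) (hLne : L.Nonempty) {x : E} (hx : x ∈ K) :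
    infDist x L ≤ hausdorffDist (frontier K) (frontier L) := by
  by_cases hxL : x ∈ L
  · exact (infDist_zero_of_mem hxL).trans_le hausdorffDist_nonneg
  obtain ⟨p, hp⟩ := hLne
  obtain ⟨y, hyK, hxy⟩ := hLv.exists_mem_frontier_infDist_le hK hp hx hxL
  have hLfr : (frontier L).Nonempty :=
    nonempty_frontier_iff.2 ⟨⟨p, hp⟩, (ne_univ_iff_exists_notMem L).2 ⟨x, hxL⟩⟩
  calc infDist x L ≤ infDist y L := hxy
    _ = infDist y (closure L) := infDist_closure.symm
    _ ≤ infDist y (frontier L) := infDist_le_infDist_of_subset frontier_subset_closure hLfr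
    _ ≤ hausdorffDist (frontier K) (frontier L) :=
        infDist_le_hausdorffDist_of_mem hyK <| hausdorffEDist_ne_top_of_nonempty_of_bounded
          ⟨y, hyK⟩ hLfr (hK.closure.subset frontier_subset_closure)
          (hL.closure.subset frontier_subset_closure)

theorem infDist_frontier_le_infDist_of_notMem {L : Set E} {x : E} (hx : x ∉ L) :
    infDist x (frontier L) ≤ infDist x L := by
  rcases L.eq_empty_or_nonempty with rfl | hL
  · simp
  refine (le_infDist hL).2 fun p hp => ?_
  obtain ⟨q, hqseg, hq⟩ := (convex_segment x p).isPreconnected.inter_frontier_nonempty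
    ⟨p, right_mem_segment ℝ x p, hp⟩ ⟨x, left_mem_segment ℝ x p, hx⟩
  exact (infDist_le_dist_of_mem hq).trans
    (mem_closedBall'.1 (segment_subset_closedBall_left x p hqseg))

end NormedSpace

section InnerProductSpace

variable {F : Type*} [NormedAddCommGroup F] [InnerProductSpace ℝ F]

theorem Convex.exists_norm_eq_one_inner_le_of_mem_frontier [CompleteSpace F] {K : Set F}
    (hK : Convex ℝ K) (hKi : (interior K).Nonempty) {x : F} (hx : x ∈ frontier K) :
    ∃ u : F, ‖u‖ = 1 ∧ ∀ k ∈ K, ⟪u, k - x⟫ ≤ 0 := by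
  obtain ⟨f, hf0, hf⟩ := geometric_hahn_banach_of_nonempty_interior_point hK hx.2 hKi
  set v := (InnerProductSpace.toDual ℝ F).symm f
  have hv : ‖v‖ ≠ 0 := by simpa [v] using hf0
  refine ⟨‖v‖⁻¹ • v, by rw [norm_smul, norm_inv, norm_norm, inv_mul_cancel₀ hv], fun k hk => ?_⟩
  rw [real_inner_smul_left, inner_sub_right, InnerProductSpace.toDual_symm_apply,
    InnerProductSpace.toDual_symm_apply]
  exact mul_nonpos_of_nonneg_of_nonpos (by positivity) (sub_nonpos.2 (hf k hk))

theorem le_infDist_add_smul_of_inner_le {K : Set F} (hK : K.Nonempty) {u x : F} (hu : ‖u‖ = 1)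
    (hux : ∀ k ∈ K, ⟪u, k - x⟫ ≤ 0) {t : ℝ} : t ≤ infDist (x + t • u) K := by
  refine (le_infDist hK).2 fun k hk => ?_
  calc t = ⟪u, t • u⟫ := by rw [real_inner_smul_right, real_inner_self_eq_norm_sq, hu]; ring
    _ ≤ ⟪u, t • u⟫ - ⟪u, k - x⟫ := le_sub_self_iff _ |>.2 (hux k hk)
    _ = ⟪u, x + t • u - k⟫ := by rw [← inner_sub_right]; congr 1; abel
    _ ≤ dist (x + t • u) k := by
        rw [dist_eq_norm]; exact (real_inner_le_norm _ _).trans (by rw [hu, one_mul])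

theorem Convex.infDist_frontier_le_hausdorffDist [CompleteSpace F] {K L : Set F}
    (hKv : Convex ℝ K) (hKi : (interior K).Nonempty) (hKc : IsClosed K)
    (hK : Bornology.IsBounded K) (hLc : IsClosed L) (hL : Bornology.IsBounded L)
    (hLne : L.Nonempty) {x : F} (hx : x ∈ frontier K) :
    infDist x (frontier L) ≤ hausdorffDist K L := by
  have hKne : K.Nonempty := hKi.mono interior_subset
  have hfin := hausdorffEDist_ne_top_of_nonempty_of_bounded hKne hLne hK hL
  by_cases hxL : x ∈ L
  · obtain ⟨u, hu, hux⟩ := hKv.exists_norm_eq_one_inner_le_of_mem_frontier hKi hx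
    obtain ⟨t, ht, hq⟩ :=
      hL.exists_add_smul_mem_frontier hxL (norm_ne_zero_iff.1 (hu ▸ one_ne_zero))
    calc infDist x (frontier L) ≤ dist x (x + t • u) := infDist_le_dist_of_mem hq
      _ = t := by rw [dist_self_add_right, norm_smul, hu, mul_one, Real.norm_of_nonneg ht]
      _ ≤ infDist (x + t • u) K := le_infDist_add_smul_of_inner_le hKne hu hux
      _ ≤ hausdorffDist L K := infDist_le_hausdorffDist_of_mem (hLc.frontier_subset hq)
            (by rwa [hausdorffEDist_comm])
      _ = hausdorffDist K L := hausdorffDist_comm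
  · exact (infDist_frontier_le_infDist_of_notMem hxL).trans
      (infDist_le_hausdorffDist_of_mem (hKc.frontier_subset hx) hfin)

end InnerProductSpace

/-- the Hausdorff distance of two convex bodies equals that of their
boundaries. -/
theorem hausdorffDist_eq_hausdorffDist_frontier {d : ℕ} (K L : Set (Euc d))
    (hKc : IsCompact K) (hKv : Convex ℝ K) (hKi : (interior K).Nonempty)
    (hLc : IsCompact L) (hLv : Convex ℝ L) (hLi : (interior L).Nonempty) :
    hausdorffDist K L = hausdorffDist (frontier K) (frontier L) := by
  have hKne : K.Nonempty := hKi.mono interior_subset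
  have hLne : L.Nonempty := hLi.mono interior_subset
  apply le_antisymm
  · refine hausdorffDist_le_of_infDist hausdorffDist_nonneg
      (fun x hx => hLv.infDist_le_hausdorffDist_frontier hKc.isBounded hLc.isBounded hLne hx)
      (fun x hx => ?_)
    rw [hausdorffDist_comm]
    exact hKv.infDist_le_hausdorffDist_frontier hLc.isBounded hKc.isBounded hKne hx
  · refine hausdorffDist_le_of_infDist hausdorffDist_nonneg
      (fun x hx => hKv.infDist_frontier_le_hausdorffDist hKi hKc.isClosed hKc.isBounded
        hLc.isClosed hLc.isBounded hLne hx)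
      (fun x hx => ?_)
    rw [hausdorffDist_comm]
    exact hLv.infDist_frontier_le_hausdorffDist hLi hLc.isClosed hLc.isBounded
      hKc.isClosed hKc.isBounded hKne hx
end
end

section
/- Let T : X → X be a non-uniquely ergodic topological dynamical system on a compact metric space with dense set of periodic measures. Let F : X → ℝ^d be continuous, K ⊂ ℝ^d a nonempty compact convex set, and ε > 0 with d_H(R(F), K) ≤ ε. Then there exists a continuous F′ : X → ℝ^d with R(F′) ⊂ relint(K), ‖F − F′‖_∞ ≤ 2ε, and F′ is cohomologous to a continuous F″ whose image lies in the affine hull of K. -/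
open MeasureTheory Topology Metric Set Filter Function
open scoped ENNReal RealInnerProductSpace

noncomputable section

/-!
Shrink `K` towards a point of its relative interior by a homothety of ratio close to `1`: the
image `C` is a compact convex subset of `relint K` within `ε / 2` of every point of `K`. Weak-*
limits of orbit measures are invariant (Krylov–Bogolyubov), so for some `n` every Birkhoff average
`Aₙ F (y)` lies within `ε / 2` of `R(F)`, hence within `2ε` of `C`. Put `F'' := P ∘ Aₙ F`, where `P`
is the nearest-point projection onto `C`. Since `F - Aₙ F` is a coboundary, `F' := F'' + (F - Aₙ F)`
is cohomologous to `F''`, so `R(F') = R(F'') ⊆ C`, and `F - F' = Aₙ F - P ∘ Aₙ F`.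
-/

open scoped BoundedContinuousFunction

section BirkhoffSums

variable {α E : Type*}

theorem birkhoffAverage_comp_self [AddCommMonoid E] [Module ℝ E] (T : α → α) (f : α → E) (n : ℕ)
    (x : α) : birkhoffAverage ℝ T (f ∘ T) n x = birkhoffAverage ℝ T f n (T x) := by
  simp only [birkhoffAverage, birkhoffSum, comp_apply, ← iterate_succ_apply' T, iterate_succ_apply]

def birkhoffTransfer [AddCommGroup E] [Module ℝ E] (T : α → α) (f : α → E) (n : ℕ) (x : α) : E :=
  (n : ℝ)⁻¹ • ∑ j ∈ Finset.range n, birkhoffSum T f j x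

theorem sub_birkhoffAverage_eq_birkhoffTransfer_sub [AddCommGroup E] [Module ℝ E] (T : α → α)
    (f : α → E) {n : ℕ} (hn : n ≠ 0) (x : α) :
    f x - birkhoffAverage ℝ T f n x = birkhoffTransfer T f n x - birkhoffTransfer T f n (T x) := by
  have hshift (j : ℕ) : birkhoffSum T f j x - birkhoffSum T f j (T x) =
      f x - (birkhoffSum T f (j + 1) x - birkhoffSum T f j x) := by
    rw [birkhoffSum_succ']; abel
  rw [birkhoffTransfer, birkhoffTransfer, ← smul_sub, ← Finset.sum_sub_distrib,
    Finset.sum_congr rfl fun j _ ↦ hshift j, Finset.sum_sub_distrib,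
    Finset.sum_range_sub (birkhoffSum T f · x), birkhoffSum_zero, sub_zero, Finset.sum_const,
    Finset.card_range, smul_sub, ← Nat.cast_smul_eq_nsmul ℝ, smul_smul,
    inv_mul_cancel₀ (Nat.cast_ne_zero.2 hn), one_smul, birkhoffAverage]

variable [TopologicalSpace α] {T : α → α} {f : α → E}

theorem continuous_birkhoffSum [AddCommMonoid E] [TopologicalSpace E] [ContinuousAdd E]
    (hT : Continuous T) (hf : Continuous f) (n : ℕ) : Continuous (birkhoffSum T f n) :=
  continuous_finsetSum _ fun i _ ↦ hf.comp (hT.iterate i)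

variable [AddCommGroup E] [Module ℝ E] [TopologicalSpace E] [IsTopologicalAddGroup E]
  [ContinuousConstSMul ℝ E]

theorem continuous_birkhoffAverage (hT : Continuous T) (hf : Continuous f) (n : ℕ) :
    Continuous (birkhoffAverage ℝ T f n) :=
  (continuous_birkhoffSum hT hf n).const_smul _

theorem continuous_birkhoffTransfer (hT : Continuous T) (hf : Continuous f) (n : ℕ) :
    Continuous (birkhoffTransfer T f n) :=
  (continuous_finsetSum _ fun j _ ↦ continuous_birkhoffSum hT hf j).const_smul _

end BirkhoffSums

section OrbitMeasure

variable {X : Type*} [MeasurableSpace X]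

def orbitMeasure (T : X → X) (n : ℕ) (x : X) : Measure X :=
  (n : ℝ≥0∞)⁻¹ • ∑ i ∈ Finset.range n, Measure.dirac (T^[i] x)

theorem isProbabilityMeasure_orbitMeasure (T : X → X) {n : ℕ} (hn : n ≠ 0) (x : X) :
    IsProbabilityMeasure (orbitMeasure T n x) := by
  constructor
  simp [orbitMeasure, ENNReal.inv_mul_cancel (Nat.cast_ne_zero.2 hn) (ENNReal.natCast_ne_top n)]

theorem integral_orbitMeasure [MeasurableSingletonClass X] {E : Type*} [NormedAddCommGroup E]
    [NormedSpace ℝ E] [CompleteSpace E] (T : X → X) (n : ℕ) (x : X) (f : X → E) :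
    ∫ y, f y ∂orbitMeasure T n x = birkhoffAverage ℝ T f n x := by
  rw [orbitMeasure, integral_smul_measure, integral_finsetSum_measure fun i _ ↦
    integrable_dirac enorm_lt_top]
  simp [birkhoffAverage, birkhoffSum]

theorem map_eq_of_tendsto_orbitMeasure [MetricSpace X] [BorelSpace X] {T : X → X}
    (hT : Continuous T) {ι : Type*} {l : Filter ι} [l.NeBot]
    {n : ι → ℕ} (hn : Tendsto n l atTop) (x : ι → X) {ν : ι → ProbabilityMeasure X}
    (hν : ∀ i, (ν i : Measure X) = orbitMeasure T (n i) (x i)) {μ : ProbabilityMeasure X}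
    (hμ : Tendsto ν l (𝓝 μ)) :
    (μ : Measure X).map T = μ := by
  refine ext_of_forall_integral_eq_of_IsFiniteMeasure fun f ↦ ?_
  have hlim (g : X →ᵇ ℝ) :
      Tendsto (fun i ↦ birkhoffAverage ℝ T g (n i) (x i)) l (𝓝 (∫ y, g y ∂μ)) := by
    simpa only [comp_def, hν, integral_orbitMeasure] using
      ((ProbabilityMeasure.continuous_integral_boundedContinuousFunction g).tendsto μ).comp hμ
  have hshift : Tendsto (fun i ↦ birkhoffAverage ℝ T f (n i) (T (x i)) -
      birkhoffAverage ℝ T f (n i) (x i)) l (𝓝 0) := by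
    refine squeeze_zero_norm (fun i ↦ ?_)
      ((tendsto_const_nhds (x := 2 * ‖f‖)).div_atTop (tendsto_natCast_atTop_atTop.comp hn))
    rw [← dist_eq_norm, dist_birkhoffAverage_apply_birkhoffAverage]
    exact div_le_div_of_nonneg_right (f.dist_le_two_norm _ _) (Nat.cast_nonneg _)
  rw [integral_map hT.aemeasurable f.continuous.aestronglyMeasurable]
  refine tendsto_nhds_unique (hlim (f.compContinuous ⟨T, hT⟩)) ?_
  simpa [birkhoffAverage_comp_self] using (hlim f).add hshift

end OrbitMeasure

section CompactSpace

variable {X : Type*} [TopologicalSpace X] [CompactSpace X] [MeasurableSpace X]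

theorem ContinuousMap.integrable_of_compactSpace [OpensMeasurableSpace X] {E : Type*}
    [NormedAddCommGroup E] (G : C(X, E)) (μ : Measure X) [IsFiniteMeasure μ] : Integrable G μ :=
  G.continuous.integrable_of_hasCompactSupport (HasCompactSupport.of_compactSpace _)

theorem ProbabilityMeasure.continuous_integral_continuousMap_of_finiteDimensional
    [OpensMeasurableSpace X] {E : Type*} [NormedAddCommGroup E] [NormedSpace ℝ E]
    [FiniteDimensional ℝ E] (f : C(X, E)) :
    Continuous fun μ : ProbabilityMeasure X ↦ ∫ x, f x ∂μ := by
  let b := Module.finBasis ℝ E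
  rw [← b.equivFunL.comp_continuous_iff]
  refine continuous_pi fun i ↦ ?_
  let L : E →L[ℝ] ℝ := LinearMap.toContinuousLinearMap (b.coord i)
  have hL (μ : ProbabilityMeasure X) : b.equivFunL (∫ x, f x ∂μ) i = ∫ x, L (f x) ∂μ :=
    (L.integral_comp_comm (f.integrable_of_compactSpace μ)).symm
  simp only [comp_apply, hL]
  exact ProbabilityMeasure.continuous_integral_continuousMap ((⟨L, L.continuous⟩ : C(E, ℝ)).comp f)

variable [BorelSpace X] {T : X → X} {d : ℕ}

theorem rotSet_subset_of_range_subset {G : C(X, Euc d)} {C : Set (Euc d)} (hCc : IsClosed C)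
    (hCv : Convex ℝ C) (hG : range G ⊆ C) : rotSet T G ⊆ C := by
  rintro _ ⟨μ, hμ, -, rfl⟩
  exact hCv.integral_mem hCc (ae_of_all _ fun x ↦ hG ⟨x, rfl⟩) (G.integrable_of_compactSpace μ)

theorem rotSet_subset_closedBall (G : C(X, Euc d)) : rotSet T G ⊆ closedBall 0 ‖G‖ :=
  rotSet_subset_of_range_subset isClosed_closedBall (convex_closedBall 0 _)
    (range_subset_iff.2 fun x ↦ mem_closedBall_zero_iff.2 (G.norm_coe_le_norm x))

theorem rotSet_add_coboundary (hT : Continuous T) (G H : C(X, Euc d)) :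
    rotSet T (fun x ↦ G x + (H x - H (T x))) = rotSet T G := by
  ext w
  refine exists_congr fun μ ↦ and_congr_right fun hμ ↦ and_congr_right fun hinv ↦ ?_
  have hHT : Integrable (fun x ↦ H (T x)) μ := (H.comp ⟨T, hT⟩).integrable_of_compactSpace μ
  have hcob : ∫ x, (H x - H (T x)) ∂μ = 0 := by
    rw [integral_sub (H.integrable_of_compactSpace μ) hHT, ← integral_map hT.aemeasurable
      H.continuous.aestronglyMeasurable, hinv, sub_self]
  have hHi : Integrable (fun x ↦ H x - H (T x)) μ := (H.integrable_of_compactSpace μ).sub hHT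
  rw [integral_add (G.integrable_of_compactSpace μ) hHi, hcob, add_zero]

end CompactSpace

theorem exists_birkhoffAverage_dist_rotSet_lt {X : Type*} [MetricSpace X] [CompactSpace X]
    [MeasurableSpace X] [BorelSpace X] {T : X → X} (hT : Continuous T) {d : ℕ}
    (F : C(X, Euc d)) {δ : ℝ} (hδ : 0 < δ) :
    ∃ n ≠ 0, ∀ y, ∃ w ∈ rotSet T F, dist (birkhoffAverage ℝ T F n y) w < δ := by
  by_contra! h
  choose x hx using fun k : ℕ ↦ h (k + 1) k.succ_ne_zero
  let ν (k : ℕ) : ProbabilityMeasure X :=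
    ⟨orbitMeasure T (k + 1) (x k), isProbabilityMeasure_orbitMeasure T k.succ_ne_zero _⟩
  obtain ⟨U, hU⟩ := exists_ultrafilter_le (atTop : Filter ℕ)
  obtain ⟨μ, -, hμ⟩ := isCompact_univ.ultrafilter_le_nhds (U.map ν) (by simp)
  have hinv := map_eq_of_tendsto_orbitMeasure hT ((tendsto_add_atTop_nat 1).mono_left hU) x
    (fun _ ↦ rfl) hμ
  have hF := ((ProbabilityMeasure.continuous_integral_continuousMap_of_finiteDimensional
    F).tendsto μ).comp hμ
  simp only [comp_def] at hF
  simp only [ν, ProbabilityMeasure.coe_mk, integral_orbitMeasure] at hF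
  obtain ⟨k, hk⟩ := (hF.eventually (ball_mem_nhds _ hδ)).exists
  exact (hx k _ ⟨μ, inferInstance, hinv, rfl⟩).not_gt hk

section ConvexGeometry

variable {E : Type*} [NormedAddCommGroup E] [NormedSpace ℝ E] {K : Set E}

theorem mem_intrinsicInterior_iff_exists_ball {z : E} :
    z ∈ intrinsicInterior ℝ K ↔
      z ∈ affineSpan ℝ K ∧ ∃ r > 0, ∀ u ∈ affineSpan ℝ K, dist u z < r → u ∈ K := by
  constructor
  · rintro ⟨y, hy, rfl⟩
    obtain ⟨r, hr, hball⟩ := Metric.mem_nhds_iff.1 (mem_interior_iff_mem_nhds.1 hy)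
    exact ⟨y.2, r, hr, fun u hu hdist ↦
      hball (show (⟨u, hu⟩ : affineSpan ℝ K) ∈ ball y r from hdist)⟩
  · rintro ⟨hz, r, hr, hball⟩
    exact ⟨⟨z, hz⟩, mem_interior_iff_mem_nhds.2 (Metric.mem_nhds_iff.2
      ⟨r, hr, fun u hu ↦ hball u u.2 hu⟩), rfl⟩

theorem Convex.homothety_mem_intrinsicInterior (hK : Convex ℝ K) {v k : E}
    (hv : v ∈ intrinsicInterior ℝ K) (hk : k ∈ K) {θ : ℝ} (hθ₀ : 0 ≤ θ) (hθ₁ : θ < 1) :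
    AffineMap.homothety v θ k ∈ intrinsicInterior ℝ K := by
  obtain ⟨hvK, r, hr, hball⟩ := mem_intrinsicInterior_iff_exists_ball.1 hv
  set z := AffineMap.homothety v θ k
  have hz : z = θ • k + (1 - θ) • v := by
    simp only [z, AffineMap.homothety_apply, vsub_eq_sub, vadd_eq_add]
    module
  have hτ : 0 < 1 - θ := sub_pos.2 hθ₁
  have hzK : z ∈ K := hz ▸ hK hk (intrinsicInterior_subset hv) hθ₀ hτ.le (by ring)
  refine mem_intrinsicInterior_iff_exists_ball.2
    ⟨subset_affineSpan ℝ K hzK, (1 - θ) * r, mul_pos hτ hr, fun u hu hdist ↦ ?_⟩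
  -- `u` lies on the segment from `k` to the point `u'`, which is close to `v`.
  set u' := (1 - θ)⁻¹ • (u - z) + v
  have hu' : u' ∈ K := by
    refine hball u' ((affineSpan ℝ K).smul_vsub_vadd_mem _ hu (subset_affineSpan ℝ K hzK) hvK) ?_
    rw [dist_eq_norm, add_sub_cancel_right, norm_smul, norm_inv, Real.norm_of_nonneg hτ.le,
      ← dist_eq_norm, inv_mul_lt_iff₀ hτ]
    exact hdist
  have hu : u = θ • k + (1 - θ) • u' := by
    simp only [u', smul_add, smul_smul, mul_inv_cancel₀ hτ.ne', one_smul, hz]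
    module
  exact hu ▸ hK hk hu' hθ₀ hτ.le (by ring)

theorem Convex.exists_subset_intrinsicInterior_forall_exists_dist_le [FiniteDimensional ℝ E]
    (hKv : Convex ℝ K) (hKne : K.Nonempty) (hKc : IsCompact K) {η : ℝ} (hη : 0 < η) :
    ∃ C ⊆ intrinsicInterior ℝ K, C.Nonempty ∧ IsCompact C ∧ Convex ℝ C ∧
      ∀ k ∈ K, ∃ c ∈ C, dist k c ≤ η := by
  obtain ⟨v, hv⟩ := hKne.intrinsicInterior hKv
  set D := diam K
  have hD : 0 ≤ D := diam_nonneg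
  set θ := 1 - η / (D + η)
  have hθ₁ : 0 < 1 - θ := by simp only [θ, sub_sub_cancel]; positivity
  have hθ₀ : 0 ≤ θ := by
    simp only [θ, sub_nonneg]
    exact div_le_one_of_le₀ (by linarith) (by positivity)
  refine ⟨AffineMap.homothety v θ '' K, ?_, hKne.image _,
    hKc.image (AffineMap.homothety_continuous v θ), hKv.affine_image _, fun k hk ↦
    ⟨_, mem_image_of_mem _ hk, ?_⟩⟩
  · rintro _ ⟨k, hk, rfl⟩
    exact hKv.homothety_mem_intrinsicInterior hv hk hθ₀ (by linarith)
  · rw [dist_self_homothety, Real.norm_of_nonneg hθ₁.le]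
    calc (1 - θ) * dist v k ≤ η / (D + η) * D := by
          gcongr
          · simp [θ]
          · exact dist_le_diam_of_mem hKc.isBounded (intrinsicInterior_subset hv) hk
      _ ≤ η := by
          rw [div_mul_eq_mul_div, div_le_iff₀ (by positivity)]
          nlinarith

end ConvexGeometry

theorem Convex.exists_lipschitzWith_one_nearest {F : Type*} [NormedAddCommGroup F]
    [InnerProductSpace ℝ F] {K : Set F} (hKv : Convex ℝ K) (hKne : K.Nonempty)
    (hKc : IsComplete K) :
    ∃ P : F → F, LipschitzWith 1 P ∧ (∀ z, P z ∈ K) ∧ ∀ z, ∀ w ∈ K, ‖z - P z‖ ≤ ‖z - w‖ := by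
  choose P hPK hPmin using exists_norm_eq_iInf_of_complete_convex hKne hKc hKv
  have hobtuse (z w : F) (hw : w ∈ K) : ⟪z - P z, w - P z⟫ ≤ 0 :=
    (norm_eq_iInf_iff_real_inner_le_zero hKv (hPK z)).1 (hPmin z) w hw
  refine ⟨P, LipschitzWith.of_dist_le_mul fun z z' ↦ ?_, hPK, fun z w hw ↦ ?_⟩
  · -- Adding the obtuse-angle conditions at `z` and `z'` gives
    -- `‖P z - P z'‖² ≤ ⟪z - z', P z - P z'⟫`.
    have h := add_nonpos (hobtuse z (P z') (hPK z')) (hobtuse z' (P z) (hPK z))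
    have hsq : ‖P z - P z'‖ ^ 2 ≤ ‖z - z'‖ * ‖P z - P z'‖ := by
      rw [← real_inner_self_eq_norm_sq]
      refine le_trans ?_ (real_inner_le_norm (z - z') _)
      have : ⟪z - P z, P z' - P z⟫ + ⟪z' - P z', P z - P z'⟫ =
          ⟪P z - P z', P z - P z'⟫ - ⟪z - z', P z - P z'⟫ := by
        rw [← neg_sub (P z) (P z'), inner_neg_right, neg_add_eq_sub, ← inner_sub_left,
          ← inner_sub_left]
        congr 1; abel
      linarith
    rw [NNReal.coe_one, one_mul, dist_eq_norm, dist_eq_norm]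
    nlinarith [norm_nonneg (P z - P z'), norm_nonneg (z - z')]
  · rw [hPmin z]
    exact ciInf_le ⟨0, by rintro _ ⟨_, rfl⟩; positivity⟩ (⟨w, hw⟩ : K)

theorem adjustment_lemma_general {d : ℕ} {X : Type*} [MetricSpace X] [CompactSpace X]
    [MeasurableSpace X] [BorelSpace X] (T : X → X) (hT : Continuous T)
    (F : C(X, Euc d)) (K : Set (Euc d)) (hKne : K.Nonempty) (hKc : IsCompact K)
    (hKv : Convex ℝ K) (ε : ℝ) (hε : 0 < ε) (hd : hausdorffDist (rotSet T F) K ≤ ε) :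
    ∃ F' : C(X, Euc d),
      rotSet T F' ⊆ intrinsicInterior ℝ K ∧
      ‖F - F'‖ ≤ 2 * ε ∧
      ∃ F'' H : C(X, Euc d), (∀ x : X, F' x - F'' x = H x - H (T x)) ∧
        range F'' ⊆ (affineSpan ℝ K : Set (Euc d)) := by
  obtain ⟨C, hCK, hCne, hCc, hCv, hKC⟩ :=
    hKv.exists_subset_intrinsicInterior_forall_exists_dist_le hKne hKc (half_pos hε)
  obtain ⟨P, hP, hPC, hPmin⟩ := hCv.exists_lipschitzWith_one_nearest hCne hCc.isComplete
  obtain ⟨n, hn, hA⟩ := exists_birkhoffAverage_dist_rotSet_lt hT F (half_pos hε)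
  set A := birkhoffAverage ℝ T F n
  let F'' : C(X, Euc d) :=
    ⟨P ∘ A, hP.continuous.comp (continuous_birkhoffAverage hT F.continuous n)⟩
  let H : C(X, Euc d) := ⟨birkhoffTransfer T F n, continuous_birkhoffTransfer hT F.continuous n⟩
  let F' : C(X, Euc d) := F'' + (H - H.comp ⟨T, hT⟩)
  refine ⟨F', ?_, ?_, F'', H, fun x ↦ by simp [F'], ?_⟩
  · exact (rotSet_add_coboundary hT F'' H).le.trans <| (rotSet_subset_of_range_subset
      hCc.isClosed hCv (range_subset_iff.2 fun x ↦ hPC _)).trans hCK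
  · refine (ContinuousMap.norm_le _ (by positivity)).2 fun y ↦ ?_
    obtain ⟨w, hwR, hwA⟩ := hA y
    obtain ⟨k, hk, hwk⟩ := hKc.exists_infDist_eq_dist hKne w
    obtain ⟨c, hc, hkc⟩ := hKC k hk
    have hwK : dist w k ≤ ε := hwk ▸ (infDist_le_hausdorffDist_of_mem hwR
      (hausdorffEDist_ne_top_of_nonempty_of_bounded ⟨w, hwR⟩ hKne
        (isBounded_closedBall.subset (rotSet_subset_closedBall F)) hKc.isBounded)).trans hd
    have hFF' : (F - F') y = A y - P (A y) := by
      simp only [F', F'', H, ContinuousMap.sub_apply, ContinuousMap.add_apply,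
        ContinuousMap.comp_apply, ContinuousMap.coe_mk, comp_apply,
        ← sub_birkhoffAverage_eq_birkhoffTransfer_sub T F hn y]
      abel
    calc ‖(F - F') y‖ = ‖A y - P (A y)‖ := by rw [hFF']
      _ ≤ ‖A y - c‖ := hPmin _ c hc
      _ ≤ dist (A y) w + dist w k + dist k c := by rw [← dist_eq_norm]; exact dist_triangle4 ..
      _ ≤ 2 * ε := by linarith
  · rintro _ ⟨x, rfl⟩
    exact subset_affineSpan ℝ K (intrinsicInterior_subset (hCK (hPC _)))

/-- the adjustment lemma, putting the rotation set inside the relative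
interior of `K` at uniform cost `2ε`, via a potential cohomologous to one with image in
the affine hull of `K`. -/
theorem adjustment_lemma {d : ℕ} {X : Type*} [MetricSpace X] [CompactSpace X]
    [MeasurableSpace X] [BorelSpace X] (T : X → X) (hT : Continuous T)
    (hne : NonUniquelyErgodic T) (hdense : DensePeriodicMeasures T)
    (F : C(X, Euc d)) (K : Set (Euc d)) (hKne : K.Nonempty) (hKc : IsCompact K)
    (hKv : Convex ℝ K) (ε : ℝ) (hε : 0 < ε) (hd : hausdorffDist (rotSet T F) K ≤ ε) :
    ∃ F' : C(X, Euc d),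
      rotSet T F' ⊆ intrinsicInterior ℝ K ∧
      ‖F - F'‖ ≤ 2 * ε ∧
      ∃ F'' H : C(X, Euc d), (∀ x : X, F' x - F'' x = H x - H (T x)) ∧
        range F'' ⊆ (affineSpan ℝ K : Set (Euc d)) :=
  adjustment_lemma_general T hT F K hKne hKc hKv ε hε hd
end
end

section
/- Suppose T : X → X has a fixed point x₀. Then there exists a nonempty open set U in the space Lip(X, ℝ²) of Lipschitz potentials (with the Lipschitz norm) such that for all F ∈ U, the rotation set R(F) has a corner (a boundary point where ∂R(F) is non-differentiable, i.e., with more than one supporting line). Consequently, the restriction of the rotation map R to Lip(X, ℝ²) is not an open map into (CB(ℝ²), d_H). -/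
open MeasureTheory Topology Metric Set Filter Function
open scoped ENNReal RealInnerProductSpace

noncomputable section

/-!
Take `F₀ x = (0, -2 d(x, x₀))`. The Dirac mass at the fixed point puts `G x₀` into the rotation
set of every potential `G`. If `G - F₀` is `L`-Lipschitz with `L ≤ 1` and `u = (±3/5, 4/5)`,
then `⟪G x - G x₀, u⟫ ≤ (L - 8/5) d(x, x₀) ≤ 0`, so after integration both `u` are outer
normals of `R(G)` at `G x₀`: this point is a corner. The closed `η`-neighbourhood `K` of `R(F₀)`
is compact, convex and `η`-close to `R(F₀)`, but it is not `R(G)` for such a `G`: `K` contains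
`η u` for both normals, which forces the second coordinate of `G x₀` to be at least `5η/4`,
whereas `R(F₀)` lies in the half-plane `y ≤ 0`, so `K` lies in `y ≤ η`.
-/

theorem inner_vec_two (v : Euc 2) (a b : ℝ) : ⟪v, !₂[a, b]⟫ = a * v 0 + b * v 1 := by
  simp [PiLp.inner_apply, Fin.sum_univ_two]

section InnerProductSpace

variable {E : Type*} [NormedAddCommGroup E] [InnerProductSpace ℝ E]

theorem mem_frontier_of_forall_inner_le {S : Set E} {v u : E} (hv : v ∈ S) (hu : u ≠ 0)
    (h : ∀ w ∈ S, ⟪w, u⟫ ≤ ⟪v, u⟫) : v ∈ frontier S := by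
  refine ⟨subset_closure hv, fun hint => ?_⟩
  have hpath : Tendsto (fun t : ℝ => v + t • u) (𝓝[>] 0) (𝓝 v) := by
    have : Continuous fun t : ℝ => v + t • u := by fun_prop
    simpa using (this.tendsto 0).mono_left nhdsWithin_le_nhds
  obtain ⟨t, htS, ht⟩ :=
    ((hpath.eventually (mem_interior_iff_mem_nhds.mp hint)).and self_mem_nhdsWithin).exists
  have := h _ htS
  rw [inner_add_left, real_inner_smul_left, real_inner_self_eq_norm_sq] at this
  have hu2 : 0 < ‖u‖ ^ 2 := by positivity
  nlinarith

theorem inner_le_add_of_mem_cthickening {S : Set E} {u v : E} {c δ : ℝ} (hu : ‖u‖ ≤ 1)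
    (hδ : 0 ≤ δ) (hS : ∀ w ∈ S, ⟪w, u⟫ ≤ c) (hv : v ∈ cthickening δ S) : ⟪v, u⟫ ≤ c + δ := by
  rw [cthickening_eq_iInter_thickening hδ, mem_iInter₂] at hv
  refine le_of_forall_pos_lt_add fun ε hε => ?_
  obtain ⟨w, hw, hvw⟩ := mem_thickening_iff.mp (hv (δ + ε) (by simpa using hε))
  have hvw_u : ⟪v - w, u⟫ ≤ dist v w :=
    calc ⟪v - w, u⟫ ≤ ‖v - w‖ * ‖u‖ := real_inner_le_norm _ _
      _ ≤ dist v w := by rw [← dist_eq_norm]; exact mul_le_of_le_one_right dist_nonneg hu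
  have := hS w hw
  rw [inner_sub_left] at hvw_u
  linarith

theorem inner_apply_le_of_lipschitzWith_sub {X : Type*} [PseudoMetricSpace X] {F G : X → E}
    {x₀ : X} {u : E} {c : ℝ} {L : NNReal} (hF : ∀ x, ⟪F x - F x₀, u⟫ ≤ -c * dist x x₀)
    (hG : LipschitzWith L (G - F)) (hu : ‖u‖ ≤ 1) (hL : L ≤ c) (x : X) :
    ⟪G x, u⟫ ≤ ⟪G x₀, u⟫ := by
  have hpert : ⟪(G - F) x - (G - F) x₀, u⟫ ≤ L * dist x x₀ :=
    calc _ ≤ ‖(G - F) x - (G - F) x₀‖ * ‖u‖ := real_inner_le_norm _ _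
      _ ≤ L * dist x x₀ := by
        rw [← dist_eq_norm]
        exact mul_le_of_le_one_right dist_nonneg hu |>.trans (hG.dist_le_mul x x₀)
  have hsplit : G x - G x₀ = (F x - F x₀) + ((G - F) x - (G - F) x₀) := by simp only [Pi.sub_apply]; abel
  have := hF x
  rw [← sub_nonpos, ← inner_sub_left, hsplit, inner_add_left]
  nlinarith [dist_nonneg (x := x) (y := x₀)]

end InnerProductSpace

theorem Continuous.of_lipschitzWith_sub {X E : Type*} [PseudoMetricSpace X]
    [NormedAddCommGroup E] {F G : X → E} {L : NNReal} (hF : Continuous F)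
    (hG : LipschitzWith L (G - F)) : Continuous G := by
  simpa using hG.continuous.add hF

theorem lt_of_iSup_norm_add_lt {ι E : Type*} [SeminormedAddGroup E] {f : ι → E} {a b : ℝ}
    (h : (⨆ i, ‖f i‖) + a < b) : a < b := by
  linarith [Real.iSup_nonneg fun i => norm_nonneg (f i)]

theorem hausdorffDist_cthickening_le {α : Type*} [PseudoMetricSpace α] {δ : ℝ} (hδ : 0 ≤ δ)
    (S : Set α) : hausdorffDist (cthickening δ S) S ≤ δ := by
  refine hausdorffDist_le_of_infDist hδ (fun x hx => ?_) fun y hy => ?_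
  · exact ENNReal.toReal_le_of_le_ofReal hδ (mem_cthickening_iff.mp hx)
  · rw [infDist_zero_of_mem (self_subset_cthickening _ hy)]
    exact hδ

theorem mem_rotSet_of_fixedPt {X : Type*} [MeasurableSpace X] [MeasurableSingletonClass X]
    {d : ℕ} {T : X → X} (hT : Measurable T) {x₀ : X} (hx₀ : T x₀ = x₀) (F : X → Euc d) :
    F x₀ ∈ rotSet T F :=
  ⟨Measure.dirac x₀, inferInstance, by rw [Measure.map_dirac' hT, hx₀], integral_dirac F x₀⟩

section RotationSet

variable {X : Type*} [TopologicalSpace X] [CompactSpace X] [MeasurableSpace X]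
  {d : ℕ} {T : X → X} {F : X → Euc d}

theorem isBounded_rotSet (hF : Continuous F) : Bornology.IsBounded (rotSet T F) := by
  obtain ⟨C, hC⟩ := isBounded_iff_forall_norm_le.mp (isCompact_range hF).isBounded
  refine (isBounded_closedBall (x := 0) (r := C)).subset ?_
  rintro _ ⟨μ, hμ, -, rfl⟩
  rw [mem_closedBall_zero_iff]
  simpa using norm_integral_le_of_norm_le_const (μ := μ) (ae_of_all _ fun x => hC _ ⟨x, rfl⟩)

variable [OpensMeasurableSpace X]

theorem Continuous.integrable_of_compactSpace (hF : Continuous F) (μ : Measure X)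
    [IsFiniteMeasure μ] : Integrable F μ :=
  hF.integrable_of_hasCompactSupport (HasCompactSupport.of_compactSpace F)

theorem inner_le_of_mem_rotSet (hF : Continuous F) {u : Euc d} {c : ℝ}
    (h : ∀ x, ⟪F x, u⟫ ≤ c) {w : Euc d} (hw : w ∈ rotSet T F) : ⟪w, u⟫ ≤ c := by
  obtain ⟨μ, hμ, -, rfl⟩ := hw
  have hint := hF.integrable_of_compactSpace μ
  rw [real_inner_comm, ← integral_inner hint]
  calc ∫ x, ⟪u, F x⟫ ∂μ ≤ ∫ _, c ∂μ :=
        integral_mono (hint.const_inner u)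
          (integrable_const c) fun x => by simpa [real_inner_comm] using h x
    _ = c := by simp

theorem convex_rotSet (hT : Measurable T) (hF : Continuous F) : Convex ℝ (rotSet T F) := by
  rintro _ ⟨μ, hμ, hμT, rfl⟩ _ ⟨ν, hν, hνT, rfl⟩ a b ha hb hab
  refine ⟨ENNReal.ofReal a • μ + ENNReal.ofReal b • ν, ⟨?_⟩, ?_, ?_⟩
  · simp [← ENNReal.ofReal_add ha hb, hab]
  · rw [Measure.map_add _ _ hT, Measure.map_smul, Measure.map_smul, hμT, hνT]
  · rw [integral_add_measure ((hF.integrable_of_compactSpace μ).smul_measure ENNReal.ofReal_ne_top)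
      ((hF.integrable_of_compactSpace ν).smul_measure ENNReal.ofReal_ne_top),
      integral_smul_measure, integral_smul_measure, ENNReal.toReal_ofReal ha,
      ENNReal.toReal_ofReal hb]

end RotationSet

section CornerPotential

variable {X : Type*} [MetricSpace X] (x₀ : X)

def cornerPotential : X → Euc 2 := fun x => !₂[0, -2 * dist x x₀]

theorem dist_cornerPotential (x y : X) :
    dist (cornerPotential x₀ x) (cornerPotential x₀ y) = 2 * |dist x x₀ - dist y x₀| := by
  rw [EuclideanSpace.dist_eq, ← abs_two, ← abs_mul, ← Real.sqrt_sq_eq_abs]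
  simp only [cornerPotential, Real.dist_eq, sq_abs, Fin.sum_univ_two, Matrix.cons_val_zero,
    Matrix.cons_val_one, Matrix.cons_val_fin_one, sub_self, zero_pow two_ne_zero, zero_add]
  ring_nf

theorem lipschitzWith_cornerPotential : LipschitzWith 2 (cornerPotential x₀) :=
  LipschitzWith.of_dist_le_mul fun x y => by
    rw [dist_cornerPotential, NNReal.coe_ofNat]
    exact mul_le_mul_of_nonneg_left (abs_dist_sub_le x y x₀) zero_le_two

theorem cornerPotential_self : cornerPotential x₀ x₀ = 0 := by
  ext i
  fin_cases i <;> simp [cornerPotential]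

theorem inner_cornerPotential_sub (u : Euc 2) (x : X) :
    ⟪cornerPotential x₀ x - cornerPotential x₀ x₀, u⟫ = -(2 * u 1) * dist x x₀ := by
  rw [cornerPotential_self, sub_zero, real_inner_comm, cornerPotential, inner_vec_two]
  ring

/-- Rational unit normals: any `u` with `‖u‖ ≤ 1` and `2 * u 1 ≥ 1` would do, e.g. the
normals `(±1, 1)/√2` of the cone `y ≤ -|x|`. -/
def cornerNormal (a : ℝ) : Euc 2 := !₂[a, 4 / 5]

theorem cornerNormal_injective : Injective cornerNormal := fun a b h => by
  simpa [cornerNormal] using congrArg (· 0) h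

theorem norm_cornerNormal {a : ℝ} (ha : |a| = 3 / 5) : ‖cornerNormal a‖ = 1 := by
  rw [EuclideanSpace.norm_eq]
  norm_num [cornerNormal, ← sq_abs a, ha]

variable [CompactSpace X] [MeasurableSpace X] [BorelSpace X] {T : X → X}

theorem inner_cornerNormal_le_of_mem_rotSet {G : X → Euc 2} {L : NNReal}
    (hG : LipschitzWith L (G - cornerPotential x₀)) (hL : (L : ℝ) ≤ 1) {a : ℝ}
    (ha : |a| = 3 / 5) {w : Euc 2} (hw : w ∈ rotSet T G) :
    ⟪w, cornerNormal a⟫ ≤ ⟪G x₀, cornerNormal a⟫ :=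
  inner_le_of_mem_rotSet ((lipschitzWith_cornerPotential x₀).continuous.of_lipschitzWith_sub hG)
    (inner_apply_le_of_lipschitzWith_sub (fun x => (inner_cornerPotential_sub x₀ _ x).le) hG
      (norm_cornerNormal ha).le (by norm_num [cornerNormal]; linarith)) hw

theorem rotSet_ne_cthickening (hT : Measurable T) (hfix : T x₀ = x₀) {G : X → Euc 2}
    {L : NNReal} (hG : LipschitzWith L (G - cornerPotential x₀)) (hL : (L : ℝ) ≤ 1) {η : ℝ}
    (hη : 0 < η) : rotSet T G ≠ cthickening η (rotSet T (cornerPotential x₀)) := by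
  intro hGK
  have h0 : (0 : Euc 2) ∈ rotSet T (cornerPotential x₀) := by
    simpa [cornerPotential_self] using mem_rotSet_of_fixedPt hT hfix (cornerPotential x₀)
  have hcorner : ∀ a, |a| = 3 / 5 → η ≤ ⟪G x₀, cornerNormal a⟫ := by
    intro a ha
    have hmem : η • cornerNormal a ∈ rotSet T G := hGK ▸ mem_cthickening_of_dist_le _ 0 _ _ h0
      (by simp [norm_smul, norm_cornerNormal ha, abs_of_pos hη])
    simpa [real_inner_smul_left, norm_cornerNormal ha] using
      inner_cornerNormal_le_of_mem_rotSet x₀ hG hL ha hmem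
  have hR₀ : ∀ w ∈ rotSet T (cornerPotential x₀), ⟪w, !₂[0, 1]⟫ ≤ 0 := fun w =>
    inner_le_of_mem_rotSet (lipschitzWith_cornerPotential x₀).continuous fun x => by
      simp [cornerPotential, inner_vec_two]
  have htop := inner_le_add_of_mem_cthickening (by simp [EuclideanSpace.norm_eq]) hη.le hR₀
    (hGK ▸ mem_rotSet_of_fixedPt hT hfix G)
  have h₁ := hcorner (3 / 5) (by norm_num)
  have h₂ := hcorner (-3 / 5) (by norm_num [abs_div])
  simp only [cornerNormal, inner_vec_two] at h₁ h₂ htop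
  linarith

end CornerPotential

/-- if `T` has a fixed point, there is a nonempty open ball (for the
Lipschitz norm `‖·‖_∞ + Lip(·)`) of Lipschitz potentials whose rotation sets all have a
corner; consequently the restriction of the rotation map to Lipschitz potentials is not
open into `(CB(ℝ²), d_H)`. -/
theorem lipschitz_rotation_map_not_open {X : Type*} [MetricSpace X] [CompactSpace X]
    [MeasurableSpace X] [BorelSpace X] (T : X → X) (hT : Continuous T)
    (x₀ : X) (hfix : T x₀ = x₀) :
    ∃ (F₀ : X → Euc 2) (_ : ∃ L : NNReal, LipschitzWith L F₀) (δ : ℝ), 0 < δ ∧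
      (∀ F : X → Euc 2,
        (∃ L : NNReal, LipschitzWith L (F - F₀) ∧ (⨆ x, ‖F x - F₀ x‖) + L < δ) →
        ∃ v ∈ frontier (rotSet T F),
          ∃ u₁ u₂ : Euc 2, u₁ ≠ u₂ ∧ ‖u₁‖ = 1 ∧ ‖u₂‖ = 1 ∧
            (∀ w ∈ rotSet T F, ⟪w, u₁⟫ ≤ ⟪v, u₁⟫) ∧
            (∀ w ∈ rotSet T F, ⟪w, u₂⟫ ≤ ⟪v, u₂⟫)) ∧
      ¬ ∃ ε : ℝ, 0 < ε ∧ ∀ K : Set (Euc 2), K.Nonempty → IsCompact K → Convex ℝ K →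
          hausdorffDist K (rotSet T F₀) < ε →
          ∃ (G : X → Euc 2) (L : NNReal), LipschitzWith L (G - F₀) ∧
            (⨆ x, ‖G x - F₀ x‖) + L < δ ∧ rotSet T G = K := by
  have hF₀ := (lipschitzWith_cornerPotential x₀).continuous
  have hpos : |(3 / 5 : ℝ)| = 3 / 5 := by norm_num
  have hneg : |(-3 / 5 : ℝ)| = 3 / 5 := by norm_num [abs_div]
  refine ⟨cornerPotential x₀, ⟨2, lipschitzWith_cornerPotential x₀⟩, 1, one_pos, ?_, ?_⟩
  · rintro F ⟨L, hF, hsum⟩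
    have hsupp : ∀ a, |a| = 3 / 5 → ∀ w ∈ rotSet T F,
        ⟪w, cornerNormal a⟫ ≤ ⟪F x₀, cornerNormal a⟫ := fun a ha w =>
      inner_cornerNormal_le_of_mem_rotSet x₀ hF (lt_of_iSup_norm_add_lt hsum).le ha
    refine ⟨F x₀, mem_frontier_of_forall_inner_le (mem_rotSet_of_fixedPt hT.measurable hfix F)
      (norm_ne_zero_iff.mp (by simp [norm_cornerNormal hpos])) (hsupp _ hpos), cornerNormal (3 / 5),
      cornerNormal (-3 / 5), cornerNormal_injective.ne (by norm_num), norm_cornerNormal hpos,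
      norm_cornerNormal hneg, hsupp _ hpos, hsupp _ hneg⟩
  · rintro ⟨ε, hε, hopen⟩
    obtain ⟨G, L, hG, hsum, hGK⟩ := hopen (cthickening (ε / 2) (rotSet T (cornerPotential x₀)))
      ⟨_, self_subset_cthickening _ (mem_rotSet_of_fixedPt hT.measurable hfix _)⟩
      (isCompact_of_isClosed_isBounded isClosed_cthickening (isBounded_rotSet hF₀).cthickening)
      ((convex_rotSet hT.measurable hF₀).cthickening _)
      ((hausdorffDist_cthickening_le (by positivity) _).trans_lt (by linarith))
    exact rotSet_ne_cthickening x₀ hT.measurable hfix hG (lt_of_iSup_norm_add_lt hsum).le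
      (half_pos hε) hGK
end
end
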